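/- arXiv:2307.08447 — 3 statements merged into one kernel-verified Lean document; each statement's English description precedes it below -/
import Mathlib

section
/- For poset ideals I ⊆ I' of a finite poset P, the segment conv({ρ(I), ρ(I')}) is an edge of the order polytope O(P) if and only if the set difference I' \ I is connected as an induced subposet (i.e., connected in the Hasse diagram of P). -/
open Set

variable {α : Type*} [Fintype α] [PartialOrder α]

/-- A poset ideal (down-set) of a poset. -/
def IsPosetIdeal (I : Set α) : Prop := ∀ ⦃a b : α⦄, a ≤ b → b ∈ I → a ∈ I

/-- The indicator vector of a subset. -/
noncomputable def rho (I : Set α) : α → ℝ := I.indicator 1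

/-- The order polytope of a finite poset. -/
noncomputable def orderPolytope (α : Type*) [Fintype α] [PartialOrder α] : Set (α → ℝ) :=
  convexHull ℝ {x | ∃ I : Set α, IsPosetIdeal I ∧ x = rho I}

/-- A subset of a poset is connected if the induced subgraph of the Hasse diagram is connected. -/
def ConnectedIn (S : Set α) : Prop := ((SimpleGraph.hasse α).induce S).Connected

/-- `conv {v, w}` is an edge (1-dimensional face) of the polytope `P`. -/
def IsEdgeOf (P : Set (α → ℝ)) (v w : α → ℝ) : Prop :=
  v ≠ w ∧ IsExtreme ℝ P (segment ℝ v w)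

/-!
The points of the segment `[ρ I, ρ I']` are the vectors `ρ I + t • ρ (I' \ I)`, `0 ≤ t ≤ 1`.

If `I' \ I` is connected: the inequalities `x p ≤ 1` (`p ∈ I`), `0 ≤ x p` (`p ∉ I'`) and
`x q ≤ x p` (`p ≤ q` in `I' \ I`) hold on `O(P)` with equality on the segment, so they hold with
equality at both ends of any open segment of `O(P)` meeting it. Such an end is 1 on `I`, 0 off `I'`
and, by connectedness, constant on `I' \ I`: it lies on the segment.

If `I' \ I` is not connected, split it into a connected component `A` and the rest `B`. Comparable
elements of `I' \ I` are joined by a chain of covers inside it, so `I ∪ A` and `I ∪ B` are ideals;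
as `ρ (I ∪ A) + ρ (I ∪ B) = ρ I + ρ I'`, the midpoint of the segment is the midpoint of two points
of `O(P)` that are not on it.
-/

open SimpleGraph

theorem SimpleGraph.Reachable.eq_of_forall_adj {V β : Type*} {G : SimpleGraph V} {f : V → β}
    (hf : ∀ v w, G.Adj v w → f v = f w) {u v : V} (h : G.Reachable u v) : f u = f v := by
  obtain ⟨p⟩ := h
  induction p with
  | nil => rfl
  | cons hadj _ ih => exact (hf _ _ hadj).trans ih

theorem Set.OrdConnected.reachable_induce_hasse {β : Type*} [PartialOrder β] [Finite β]
    {S : Set β} (hS : S.OrdConnected) {a b : β} (ha : a ∈ S) (hb : b ∈ S) (hab : a ≤ b) :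
    ((hasse β).induce S).Reachable ⟨a, ha⟩ ⟨b, hb⟩ := by
  induction a using WellFoundedGT.induction with
  | _ a ih =>
    obtain rfl | hlt := hab.eq_or_lt
    · rfl
    obtain ⟨c, hac, hcb⟩ := exists_covBy_le_of_lt hlt
    have hc : c ∈ S := hS.out ha hb ⟨hac.le, hcb⟩
    have hadj : ((hasse β).induce S).Adj ⟨a, ha⟩ ⟨c, hc⟩ := Or.inl hac
    exact hadj.reachable.trans (ih c hac.lt hc hcb)

theorem LinearMap.eq_of_mem_openSegment {E : Type*} [AddCommGroup E] [Module ℝ E]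
    (f : E →ₗ[ℝ] ℝ) {x y z : E} {c : ℝ} (h : z ∈ openSegment ℝ x y) (hx : f x ≤ c)
    (hy : f y ≤ c) (hz : f z = c) : f x = c := by
  obtain ⟨a, b, ha, hb, hab, rfl⟩ := h
  rw [map_add, map_smul, map_smul, smul_eq_mul, smul_eq_mul] at hz
  have hc : a * c + b * c = c := by rw [← add_mul, hab, one_mul]
  refine le_antisymm hx (le_of_not_gt fun hlt ↦ ?_)
  linarith [mul_lt_mul_of_pos_left hlt ha, mul_le_mul_of_nonneg_left hy hb.le]

theorem convex_setOf_antitone {β : Type*} [Preorder β] : Convex ℝ {u : β → ℝ | Antitone u} := by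
  intro x hx y hy a b ha hb _
  exact (hx.const_smul ha).add (hy.const_smul hb)

section

variable {β : Type*}

theorem rho_mem_Icc (I : Set β) (p : β) : rho I p ∈ Icc (0 : ℝ) 1 := by
  by_cases hp : p ∈ I <;> simp [rho, hp]

theorem rho_injective : Function.Injective (rho : Set β → β → ℝ) :=
  fun _ _ h ↦ indicator_one_inj ℝ h

theorem segment_rho_eq_image {I I' : Set β} (hsub : I ⊆ I') :
    segment ℝ (rho I) (rho I') = (fun t : ℝ ↦ rho I + t • rho (I' \ I)) '' Icc 0 1 := by
  rw [segment_eq_image, rho, rho, rho, indicator_sdiff hsub]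
  congr 1
  funext t
  rw [smul_sub, sub_smul, one_smul]
  abel

theorem rho_union_add_rho_union {I A B : Set β} (hIA : Disjoint I A)
    (hIB : Disjoint I B) (hAB : Disjoint A B) :
    rho (I ∪ A) + rho (I ∪ B) = rho I + rho (I ∪ (A ∪ B)) := by
  simp only [rho, indicator_union_of_disjoint hIA, indicator_union_of_disjoint hIB,
    indicator_union_of_disjoint (disjoint_union_right.2 ⟨hIA, hIB⟩),
    indicator_union_of_disjoint hAB]
  funext p
  simp only [Pi.add_apply]
  ring

theorem rho_union_image_add_rho_union_image_compl {I I' : Set β} (hsub : I ⊆ I')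
    (T : Set ↥(I' \ I)) :
    rho (I ∪ Subtype.val '' T) + rho (I ∪ Subtype.val '' Tᶜ) = rho I + rho I' := by
  have hI : ∀ T : Set ↥(I' \ I), Disjoint I (Subtype.val '' T) := fun T ↦
    disjoint_sdiff_right.mono_right (Subtype.coe_image_subset _ T)
  rw [rho_union_add_rho_union (hI T) (hI Tᶜ)
    ((disjoint_image_iff Subtype.val_injective).2 disjoint_compl_right), ← image_union,
    union_compl_self, image_univ, Subtype.range_coe, union_sdiff_cancel hsub]

theorem IsLowerSet.antitone_rho [Preorder β] {I : Set β} (hI : IsLowerSet I) :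
    Antitone (rho I) := by
  intro p q hpq
  by_cases hq : q ∈ I
  · simp [rho, hq, hI hpq hq]
  · simp only [rho, indicator_of_notMem hq]
    exact (rho_mem_Icc I p).1

theorem isPosetIdeal_iff_isLowerSet [PartialOrder β] {I : Set β} :
    IsPosetIdeal I ↔ IsLowerSet I :=
  ⟨fun h _ _ hab hb ↦ h hab hb, fun h _ _ hab hb ↦ h hab hb⟩

theorem IsLowerSet.union_image_of_adj_iff [PartialOrder β] [Finite β] {I I' : Set β}
    (hI : IsLowerSet I) (hI' : IsLowerSet I') {T : Set ↥(I' \ I)}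
    (hT : ∀ p q, ((hasse β).induce (I' \ I)).Adj p q → (p ∈ T ↔ q ∈ T)) :
    IsLowerSet (I ∪ Subtype.val '' T) := by
  rintro d c hcd (hdI | ⟨d, hdT, rfl⟩)
  · exact Or.inl (hI hcd hdI)
  by_cases hcI : c ∈ I
  · exact Or.inl hcI
  have hcS : c ∈ I' \ I := ⟨hI' hcd d.2.1, hcI⟩
  have hS : (I' \ I).OrdConnected := hI'.ordConnected.inter hI.compl.ordConnected
  have hreach := hS.reachable_induce_hasse hcS d.2 hcd
  refine Or.inr ⟨⟨c, hcS⟩, ?_, rfl⟩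
  rwa [hreach.eq_of_forall_adj (f := (· ∈ T)) fun p q h ↦ propext (hT p q h)]

end

theorem rho_mem_orderPolytope {I : Set α} (hI : IsLowerSet I) : rho I ∈ orderPolytope α :=
  subset_convexHull ℝ _ ⟨I, isPosetIdeal_iff_isLowerSet.2 hI, rfl⟩

theorem orderPolytope_subset_antitone_inter_pi :
    orderPolytope α ⊆ {u | Antitone u} ∩ univ.pi fun _ ↦ Icc 0 1 := by
  refine convexHull_min ?_ (convex_setOf_antitone.inter (convex_pi fun _ _ ↦ convex_Icc 0 1))
  rintro _ ⟨I, hI, rfl⟩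
  exact ⟨(isPosetIdeal_iff_isLowerSet.1 hI).antitone_rho, fun p _ ↦ rho_mem_Icc I p⟩

theorem isExtreme_segment_rho {I I' : Set α} (hI : IsLowerSet I) (hI' : IsLowerSet I')
    (hsub : I ⊆ I') (hS : ((hasse α).induce (I' \ I)).Connected) :
    IsExtreme ℝ (orderPolytope α) (segment ℝ (rho I) (rho I')) := by
  refine ⟨(convex_convexHull ℝ _).segment_subset (rho_mem_orderPolytope hI)
    (rho_mem_orderPolytope hI'), ?_⟩
  rintro x hx y hy z hz hzxy
  rw [segment_rho_eq_image hsub] at hz ⊢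
  obtain ⟨t, -, rfl⟩ := hz
  obtain ⟨hx_anti, hx_mem⟩ := orderPolytope_subset_antitone_inter_pi hx
  obtain ⟨hy_anti, hy_mem⟩ := orderPolytope_subset_antitone_inter_pi hy
  let ev (p : α) : (α → ℝ) →ₗ[ℝ] ℝ := LinearMap.proj p
  have hone : ∀ p ∈ I, x p = 1 := fun p hp ↦
    (ev p).eq_of_mem_openSegment hzxy (hx_mem p trivial).2 (hy_mem p trivial).2
      (by simp [ev, rho, hp, hsub hp])
  have hzero : ∀ p ∉ I', x p = 0 := fun p hp ↦ neg_eq_zero.1 <|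
    (-ev p).eq_of_mem_openSegment hzxy (neg_nonpos.2 (hx_mem p trivial).1)
      (neg_nonpos.2 (hy_mem p trivial).1) (by simp [ev, rho, hp, notMem_subset hsub hp])
  have hle : ∀ p q : ↥(I' \ I), p.1 ≤ q.1 → x q = x p := fun p q hpq ↦ sub_eq_zero.1 <|
    (ev q - ev p).eq_of_mem_openSegment (c := 0) hzxy
      (sub_nonpos.2 (hx_anti hpq)) (sub_nonpos.2 (hy_anti hpq))
      (by simp [ev, rho, p.2, q.2, p.2.2, q.2.2])
  obtain ⟨p₀⟩ := hS.nonempty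
  have hconst (p : ↥(I' \ I)) : x p = x p₀ :=
    (hS.preconnected p p₀).eq_of_forall_adj (f := fun p : ↥(I' \ I) ↦ x p) fun p q h ↦ by
      rcases h with h | h
      exacts [(hle p q h.le).symm, hle q p h.le]
  refine ⟨x p₀, hx_mem p₀ trivial, funext fun p ↦ ?_⟩
  by_cases hpI : p ∈ I
  · simp [rho, hpI, hone p hpI]
  by_cases hpI' : p ∈ I'
  · simp [rho, hpI, hpI', hconst ⟨p, hpI', hpI⟩]
  · simp [rho, hpI, hpI', hzero p hpI']

theorem preconnected_of_isExtreme_segment_rho {I I' : Set α} (hI : IsLowerSet I)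
    (hI' : IsLowerSet I') (hsub : I ⊆ I')
    (hext : IsExtreme ℝ (orderPolytope α) (segment ℝ (rho I) (rho I'))) :
    ((hasse α).induce (I' \ I)).Preconnected := by
  intro u v
  by_contra huv
  set T := (((hasse α).induce (I' \ I)).connectedComponentMk u).supp
  have hT : ∀ p q, ((hasse α).induce (I' \ I)).Adj p q → (p ∈ T ↔ q ∈ T) := fun p q h ↦ by
    simp only [T, ConnectedComponent.mem_supp_iff,
      ConnectedComponent.connectedComponentMk_eq_of_adj h]
  have hA := hI.union_image_of_adj_iff hI' hT
  have hB := hI.union_image_of_adj_iff hI' (T := Tᶜ) fun p q h ↦ not_congr (hT p q h)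
  have hmid_seg : (2⁻¹ : ℝ) • (rho I + rho I') ∈ segment ℝ (rho I) (rho I') :=
    ⟨2⁻¹, 2⁻¹, by norm_num, by norm_num, by norm_num, (smul_add _ _ _).symm⟩
  have hmid_open : (2⁻¹ : ℝ) • (rho I + rho I') ∈
      openSegment ℝ (rho (I ∪ Subtype.val '' T)) (rho (I ∪ Subtype.val '' Tᶜ)) :=
    ⟨2⁻¹, 2⁻¹, by norm_num, by norm_num, by norm_num,
      by rw [← smul_add, rho_union_image_add_rho_union_image_compl hsub]⟩
  have hseg := hext.2 (rho_mem_orderPolytope hA) (rho_mem_orderPolytope hB) hmid_seg hmid_open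
  rw [segment_rho_eq_image hsub] at hseg
  obtain ⟨t, -, ht⟩ := hseg
  have huT : u.1 ∈ Subtype.val '' T := ⟨u, rfl, rfl⟩
  have hvT : v.1 ∉ Subtype.val '' T := by
    rw [Subtype.val_injective.mem_set_image, ConnectedComponent.mem_supp_iff,
      ConnectedComponent.eq]
    exact fun h ↦ huv h.symm
  have htu := congrFun ht u
  have htv := congrFun ht v
  simp [rho, u.2.2, v.2.2, huT, hvT] at htu htv
  linarith

theorem edge_iff_connected (I I' : Set α) (hI : IsPosetIdeal I) (hI' : IsPosetIdeal I')
    (hsub : I ⊆ I') :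
    IsEdgeOf (orderPolytope α) (rho I) (rho I') ↔ ConnectedIn (I' \ I) := by
  rw [isPosetIdeal_iff_isLowerSet] at hI hI'
  have hne : rho I ≠ rho I' ↔ Nonempty ↥(I' \ I) := by
    rw [rho_injective.ne_iff, nonempty_coe_sort, sdiff_nonempty]
    exact ⟨fun h h' ↦ h (hsub.antisymm h'), fun h e ↦ h e.ge⟩
  rw [IsEdgeOf, ConnectedIn, connected_iff, hne]
  exact ⟨fun ⟨hS, hext⟩ ↦ ⟨preconnected_of_isExtreme_segment_rho hI hI' hsub hext, hS⟩,
    fun hS ↦ ⟨hS.2, isExtreme_segment_rho hI hI' hsub ((connected_iff _).2 hS)⟩⟩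
end

section
/- Let C = {ρ(I_0),...,ρ(I_q)} be a chain of poset ideals I_0 ⊆ I_1 ⊆ ... ⊆ I_q of a finite poset P such that each I_j \ I_i (i < j) is connected in P. Then the face F of O(P) obtained by intersecting O(P) with: the hyperplanes x_i = x_j for all p_i, p_j ∈ I_k \ I_{k-1} (1 ≤ k ≤ q), the hyperplanes x_i = 1 for p_i ∈ I_0, and the hyperplanes x_i = 0 for p_i ∉ I_q, satisfies F = conv(C). -/
open Set

variable {α : Type*} [Fintype α] [PartialOrder α]

/-!
A point `x` of the face is constant on each block `I k \ I (k - 1)`; call its value there `c k`,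
and put `c 0 = 1` (the value on `I 0`) and `c (q + 1) = 0` (the value outside `I q`). Then `x` is
the layer-cake sum `∑ₖ (c k - c (k + 1)) • ρ(I k)`, a convex combination as soon as `c` is
antitone. That is where connectedness enters: two consecutive blocks have connected union, so some
Hasse edge `r ⋖ p` leads from the lower block into the upper one, and `x p ≤ x r` because points
of the order polytope are antitone. Conversely every `ρ(I k)` lies in the face, which is convex.
-/

section Chains

variable {ι : Type*}

@[simp]
theorem rho_of_mem {J : Set ι} {a : ι} (h : a ∈ J) : rho J a = 1 :=
  indicator_of_mem h 1

@[simp]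
theorem rho_of_notMem {J : Set ι} {a : ι} (h : a ∉ J) : rho J a = 0 :=
  indicator_of_notMem h 1

theorem sum_range_smul_rho_eq_indicator {J : ℕ → Set ι} (hJ : Monotone J) {x : ι → ℝ}
    {c : ℕ → ℝ} {n : ℕ} (h₀ : ∀ a ∈ J 0, x a = c 0)
    (hsucc : ∀ m < n, ∀ a ∈ J (m + 1) \ J m, x a = c (m + 1)) :
    ∑ k ∈ Finset.range (n + 1), (c k - c (k + 1)) • rho (J k) =
      (J n).indicator fun a => x a - c (n + 1) := by
  induction n with
  | zero =>
    ext a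
    by_cases ha : a ∈ J 0 <;> simp [ha, h₀]
  | succ n ih =>
    rw [Finset.sum_range_succ, ih fun m hm => hsucc m (by omega)]
    ext a
    by_cases ha : a ∈ J n
    · simp [ha, hJ n.le_succ ha]
    by_cases ha' : a ∈ J (n + 1)
    · simp [ha, ha', hsucc n n.lt_succ_self a ⟨ha', ha⟩]
    · simp [ha, ha']

def chainFace {q : ℕ} (I : Fin (q + 1) → Set ι) : Set (ι → ℝ) :=
  {x | (∀ k : Fin q, ∀ a ∈ I k.succ \ I k.castSucc, ∀ b ∈ I k.succ \ I k.castSucc,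
          x a = x b) ∧
       (∀ a ∈ I 0, x a = 1) ∧
       (∀ a, a ∉ I (Fin.last q) → x a = 0)}

theorem convex_chainFace {q : ℕ} (I : Fin (q + 1) → Set ι) : Convex ℝ (chainFace I) := by
  rintro y ⟨hy, hy₀, hy₁⟩ z ⟨hz, hz₀, hz₁⟩ s t - - hst
  refine ⟨fun k a ha b hb => ?_, fun a ha => ?_, fun a ha => ?_⟩ <;>
    simp only [Pi.add_apply, Pi.smul_apply, smul_eq_mul]
  · rw [hy k a ha b hb, hz k a ha b hb]
  · rw [hy₀ a ha, hz₀ a ha, mul_one, mul_one, hst]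
  · rw [hy₁ a ha, hz₁ a ha, mul_zero, mul_zero, add_zero]

theorem rho_mem_chainFace {q : ℕ} {I : Fin (q + 1) → Set ι} (hI : Monotone I)
    (k : Fin (q + 1)) :
    rho (I k) ∈ chainFace I := by
  refine ⟨fun k' a ha b hb => ?_, fun a ha => rho_of_mem (hI k.zero_le ha),
    fun a ha => rho_of_notMem fun hk => ha (hI k.le_last hk)⟩
  rcases lt_or_ge k'.castSucc k with h | h
  · have hk := hI (Fin.castSucc_lt_iff_succ_le.mp h)
    rw [rho_of_mem (hk ha.1), rho_of_mem (hk hb.1)]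
  · rw [rho_of_notMem fun h' => ha.2 (hI h h'), rho_of_notMem fun h' => hb.2 (hI h h')]

/-- The value of `x` on the blocks `I k.succ \ I k.castSucc` of a chain, read off at
representatives `a k`, padded by `1` before the first block and `0` after the last one. -/
noncomputable def blockValues (x : ι → ℝ) {q : ℕ} (a : Fin q → ι) : ℕ → ℝ
  | 0 => 1
  | m + 1 => if h : m < q then x (a ⟨m, h⟩) else 0

@[simp]
theorem blockValues_zero (x : ι → ℝ) {q : ℕ} (a : Fin q → ι) : blockValues x a 0 = 1 :=
  rfl

theorem blockValues_succ (x : ι → ℝ) {q : ℕ} (a : Fin q → ι) (m : ℕ) :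
    blockValues x a (m + 1) = if h : m < q then x (a ⟨m, h⟩) else 0 := rfl

end Chains

section OrderPolytope

variable {P : Type*} [PartialOrder P]

theorem ConnectedIn.nonempty {S : Set P} (hS : ConnectedIn S) : S.Nonempty :=
  nonempty_coe_sort.mp (SimpleGraph.Connected.nonempty hS)

theorem ConnectedIn.exists_covBy {S T : Set P} (hS : ConnectedIn S) (hT : IsPosetIdeal T)
    {a b : P} (ha : a ∈ S ∩ T) (hb : b ∈ S \ T) :
    ∃ r ∈ S ∩ T, ∃ p ∈ S \ T, r ⋖ p := by
  obtain ⟨w⟩ := hS.preconnected ⟨a, ha.1⟩ ⟨b, hb.1⟩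
  obtain ⟨d, -, hd₁, hd₂⟩ := w.exists_boundary_dart (Subtype.val ⁻¹' T) ha.2 hb.2
  refine ⟨d.fst, ⟨d.fst.2, hd₁⟩, d.snd, ⟨d.snd.2, hd₂⟩, ?_⟩
  rcases SimpleGraph.hasse_adj.mp d.adj with h | h
  · exact h
  · exact absurd (hT h.le hd₁) hd₂

theorem apply_le_apply_of_connectedIn {K T U : Set P} (hT : IsPosetIdeal T) (hKT : K ⊆ T)
    (hTU : T ⊆ U) (hconn : ConnectedIn (U \ K)) {x : P → ℝ} (hx : Antitone x)
    (hlow : ∀ y ∈ T \ K, ∀ z ∈ T \ K, x y = x z)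
    (hup : ∀ y ∈ U \ T, ∀ z ∈ U \ T, x y = x z)
    {a b : P} (ha : a ∈ T \ K) (hb : b ∈ U \ T) : x b ≤ x a := by
  obtain ⟨r, ⟨⟨-, hrK⟩, hrT⟩, p, ⟨⟨hpU, -⟩, hpT⟩, hrp⟩ :=
    hconn.exists_covBy hT ⟨⟨hTU ha.1, ha.2⟩, ha.1⟩
      ⟨⟨hb.1, fun h => hb.2 (hKT h)⟩, hb.2⟩
  calc x b = x p := hup b hb p ⟨hpU, hpT⟩
    _ ≤ x r := hx hrp.le
    _ = x a := hlow r ⟨hrT, hrK⟩ a ha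

theorem rho_mem_orderPolytope_s5 [Fintype P] {J : Set P} (hJ : IsPosetIdeal J) :
    rho J ∈ orderPolytope P :=
  subset_convexHull ℝ _ ⟨J, hJ, rfl⟩

theorem le_of_mem_orderPolytope [Fintype P] (f : (P → ℝ) →ₗ[ℝ] ℝ) {r : ℝ}
    (hf : ∀ J, IsPosetIdeal J → f (rho J) ≤ r) {x : P → ℝ} (hx : x ∈ orderPolytope P) :
    f x ≤ r :=
  convexHull_min (by rintro _ ⟨J, hJ, rfl⟩; exact hf J hJ)
    (convex_halfSpace_le f.isLinear r) hx

theorem nonneg_of_mem_orderPolytope [Fintype P] {x : P → ℝ} (hx : x ∈ orderPolytope P)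
    (a : P) : 0 ≤ x a := by
  have key := le_of_mem_orderPolytope (-LinearMap.proj a) (r := 0) (fun J _ => by
    by_cases h : a ∈ J <;> simp [h]) hx
  simpa using key

theorem le_one_of_mem_orderPolytope [Fintype P] {x : P → ℝ} (hx : x ∈ orderPolytope P)
    (a : P) : x a ≤ 1 :=
  le_of_mem_orderPolytope (LinearMap.proj a) (fun J _ => by by_cases h : a ∈ J <;> simp [h]) hx

theorem antitone_of_mem_orderPolytope [Fintype P] {x : P → ℝ} (hx : x ∈ orderPolytope P) :
    Antitone x := by
  intro a b hab
  have key := le_of_mem_orderPolytope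
    ((LinearMap.proj b : (P → ℝ) →ₗ[ℝ] ℝ) - LinearMap.proj a) (r := 0) (fun J hJ => by
    by_cases hb : b ∈ J
    · simp [hb, hJ hab hb]
    · by_cases ha : a ∈ J <;> simp [ha, hb]) hx
  simpa using key

variable {q : ℕ} {I : Fin (q + 1) → Set P}

theorem blockValues_nonneg [Fintype P] {x : P → ℝ} (hx : x ∈ orderPolytope P)
    (a : Fin q → P) (n : ℕ) : 0 ≤ blockValues x a n := by
  cases n with
  | zero => exact zero_le_one
  | succ m =>
    rw [blockValues_succ]
    split_ifs
    exacts [nonneg_of_mem_orderPolytope hx _, le_rfl]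

theorem blockValues_succ_le [Fintype P] (hI : ∀ k, IsPosetIdeal (I k)) (hmono : Monotone I)
    (hconn : ∀ i j, i < j → ConnectedIn (I j \ I i)) {x : P → ℝ}
    (hxO : x ∈ orderPolytope P) (hx : x ∈ chainFace I) {a : Fin q → P}
    (ha : ∀ k, a k ∈ I k.succ \ I k.castSucc) (n : ℕ) :
    blockValues x a (n + 1) ≤ blockValues x a n := by
  cases n with
  | zero =>
    rw [blockValues_succ, blockValues_zero]
    split_ifs
    exacts [le_one_of_mem_orderPolytope hxO _, zero_le_one]
  | succ m =>
    by_cases h : m + 1 < q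
    · simp only [blockValues_succ, dif_pos h, dif_pos (Nat.lt_of_succ_lt h)]
      exact apply_le_apply_of_connectedIn (hI _) (hmono (Fin.castSucc_le_succ _))
        (hmono (Fin.le_iff_val_le_val.mpr (by simp)))
        (hconn ⟨m, by omega⟩ ⟨m + 2, by omega⟩ (Fin.mk_lt_mk.mpr (by omega)))
        (antitone_of_mem_orderPolytope hxO) (hx.1 ⟨m, by omega⟩) (hx.1 ⟨m + 1, h⟩)
        (ha ⟨m, by omega⟩) (ha ⟨m + 1, h⟩)
    · rw [blockValues_succ, dif_neg h]
      exact blockValues_nonneg hxO a (m + 1)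

theorem mem_convexHull_of_mem_chainFace [Fintype P] (hI : ∀ k, IsPosetIdeal (I k))
    (hmono : Monotone I) (hconn : ∀ i j, i < j → ConnectedIn (I j \ I i)) {x : P → ℝ}
    (hxO : x ∈ orderPolytope P) (hx : x ∈ chainFace I) :
    x ∈ convexHull ℝ (range fun k => rho (I k)) := by
  -- `ConnectedIn` includes nonemptiness, so every block has a representative.
  choose a ha using fun k : Fin q => (hconn _ _ k.castSucc_lt_succ).nonempty
  set c := blockValues x a
  set J : ℕ → Set P := fun n => I (Fin.clamp n q)
  have hJ_of_le : ∀ n (hn : n ≤ q), J n = I ⟨n, by omega⟩ := fun n hn =>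
    congrArg I (Fin.ext (by simpa using hn))
  have hlayers := sum_range_smul_rho_eq_indicator (J := J) (c := c) (n := q)
    (hmono.comp Fin.clamp_monotone)
    (fun b hb => hx.2.1 b (by rwa [hJ_of_le 0 q.zero_le] at hb))
    (fun m hm b hb => by
      rw [hJ_of_le m hm.le, hJ_of_le (m + 1) hm] at hb
      simpa [c, blockValues_succ, hm] using hx.1 ⟨m, hm⟩ b hb _ (ha ⟨m, hm⟩))
  have hJq : J q = I (Fin.last q) := congrArg I (Fin.ext (by simp))
  have hcq : c (q + 1) = 0 := by simp [c, blockValues_succ]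
  have hx_eq : ∑ k ∈ Finset.range (q + 1), (c k - c (k + 1)) • rho (J k) = x := by
    rw [hlayers, hcq, hJq]
    ext b
    by_cases hb : b ∈ I (Fin.last q)
    · simp [hb]
    · simp [hb, hx.2.2 b hb]
  rw [← hx_eq]
  refine (convex_convexHull ℝ _).sum_mem (fun k _ => ?_) ?_ (fun k _ => ?_)
  · exact sub_nonneg.mpr (blockValues_succ_le hI hmono hconn hxO hx ha k)
  · rw [Finset.sum_range_sub', hcq]
    simp [c]
  · exact subset_convexHull ℝ _ ⟨Fin.clamp k q, rfl⟩

end OrderPolytope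

theorem face_eq_convexHull_chain (q : ℕ) (I : Fin (q + 1) → Set α)
    (hI : ∀ k, IsPosetIdeal (I k))
    (hchain : ∀ i j, i ≤ j → I i ⊆ I j)
    (hconn : ∀ i j, i < j → ConnectedIn (I j \ I i)) :
    orderPolytope α ∩
        {x | (∀ k : Fin q, ∀ a ∈ I k.succ \ I k.castSucc, ∀ b ∈ I k.succ \ I k.castSucc,
                x a = x b) ∧
             (∀ a ∈ I 0, x a = 1) ∧
             (∀ a, a ∉ I (Fin.last q) → x a = 0)} =
      convexHull ℝ (Set.range fun k => rho (I k)) := by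
  have hmono : Monotone I := fun i j h => hchain i j h
  refine Subset.antisymm
    (fun x hx => mem_convexHull_of_mem_chainFace hI hmono hconn hx.1 hx.2) ?_
  refine convexHull_min (range_subset_iff.mpr fun k => ?_)
    ((convex_convexHull ℝ _).inter (convex_chainFace I))
  exact ⟨rho_mem_orderPolytope_s5 (hI k), rho_mem_chainFace hmono k⟩
end

section
/- Let I_0 ⊆ I_1 ⊆ ... ⊆ I_q be poset ideals of a finite poset P with each I_j \ I_i (i < j) connected in the Hasse diagram, and let I be a poset ideal with I_0 ⊆ I ⊆ I_q such that for each 1 ≤ k ≤ q, either I_k \ I_{k-1} ⊆ I or (I_k \ I_{k-1}) ∩ I = ∅. Then I = I_k for some 0 ≤ k ≤ q. -/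
open Set

variable {α : Type*} [Fintype α] [PartialOrder α]

/-!
Take `m` maximal with `I m ⊆ J` and prove `J ∩ I k ⊆ I m` for `k ≥ m` by induction on `k`.
In the step, if the block `I k \ I (k-1)` lies in `J`, then the down-sets `I (k-1)` and `J` split
the connected set `I k \ I m` into two disjoint parts. A Hasse edge `u ⋖ v` cannot run from one
part to the other, since `v` lying in either down-set puts `u` in it too. So one part is everything:
either the block is empty, or `I (m+1) ⊆ J`, against the maximality of `m`.
-/

theorem ConnectedIn.subset_or_subset_of_isPosetIdeal {β : Type*} [PartialOrder β]
    {S C J : Set β} (hS : ConnectedIn S) (hC : IsPosetIdeal C) (hJ : IsPosetIdeal J)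
    (hcover : S ⊆ C ∪ J) (hdisj : ∀ x ∈ S, x ∈ C → x ∉ J) : S ⊆ C ∨ S ⊆ J := by
  by_contra! h
  obtain ⟨a, haS, haC⟩ := not_subset.1 h.1
  obtain ⟨b, hbS, hbJ⟩ := not_subset.1 h.2
  obtain ⟨w⟩ := hS.preconnected ⟨a, haS⟩ ⟨b, hbS⟩
  obtain ⟨d, -, hfst, hsnd⟩ :=
    w.exists_boundary_dart {x | x.1 ∈ J} ((hcover haS).resolve_left haC) hbJ
  have hsndC : d.snd.1 ∈ C := (hcover d.snd.2).resolve_right hsnd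
  have hfstC : d.fst.1 ∉ C := fun h => hdisj _ d.fst.2 h hfst
  rcases SimpleGraph.hasse_adj.1 d.adj with hlt | hlt
  · exact hfstC (hC hlt.le hsndC)
  · exact hsnd (hJ hlt.le hfst)

theorem inter_subset_of_connectedIn_diff {β : Type*} [PartialOrder β] {A B C J : Set β}
    (hC : IsPosetIdeal C) (hJ : IsPosetIdeal J) (hS : ConnectedIn (B \ A)) (hAJ : A ⊆ J)
    (hBJ : ¬B ⊆ J) (hCJ : J ∩ C ⊆ A) (hblock : B \ C ⊆ J ∨ (B \ C) ∩ J = ∅) :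
    J ∩ B ⊆ A := by
  rintro x ⟨hxJ, hxB⟩
  by_contra hxA
  have hxC : x ∉ C := fun hxC => hxA (hCJ ⟨hxJ, hxC⟩)
  obtain hblock | hblock := hblock
  swap
  · exact eq_empty_iff_forall_notMem.1 hblock x ⟨⟨hxB, hxC⟩, hxJ⟩
  have hcover : B \ A ⊆ C ∪ J := fun y hy =>
    or_iff_not_imp_left.2 fun hyC => hblock ⟨hy.1, hyC⟩
  have hdisj : ∀ y ∈ B \ A, y ∈ C → y ∉ J := fun y hy hyC hyJ => hy.2 (hCJ ⟨hyJ, hyC⟩)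
  obtain hsub | hsub := hS.subset_or_subset_of_isPosetIdeal hC hJ hcover hdisj
  · exact hxC (hsub ⟨hxB, hxA⟩)
  · exact hBJ fun y hyB => by_cases (fun hyA : y ∈ A => hAJ hyA) fun hyA => hsub ⟨hyB, hyA⟩

theorem sandwiched_ideal_eq_general (q : ℕ) (I : Fin (q + 1) → Set α)
    (hI : ∀ k, IsPosetIdeal (I k))
    (hconn : ∀ i j, i < j → ConnectedIn (I j \ I i))
    (J : Set α) (hJ : IsPosetIdeal J) (h0 : I 0 ⊆ J) (hq : J ⊆ I (Fin.last q))
    (hblocks : ∀ k : Fin q, I k.succ \ I k.castSucc ⊆ J ∨ (I k.succ \ I k.castSucc) ∩ J = ∅) :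
    ∃ k, J = I k := by
  obtain ⟨m, hmJ, hmax⟩ := exists_max_image {k | I k ⊆ J} id (toFinite _) ⟨0, h0⟩
  have hJm : ∀ k, m ≤ k → J ∩ I k ⊆ I m := by
    intro k
    induction k using Fin.induction with
    | zero => intro hm; rw [le_antisymm hm (Fin.zero_le m)]; exact inter_subset_right
    | succ i ih =>
      intro hmi
      obtain rfl | hmi := hmi.eq_or_lt
      · exact inter_subset_right
      exact inter_subset_of_connectedIn_diff (hI _) hJ (hconn _ _ hmi) hmJ
        (fun h => (hmax _ h).not_gt hmi) (ih (Fin.le_castSucc_iff.2 hmi)) (hblocks i)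
  exact ⟨m, ((subset_inter Subset.rfl hq).trans (hJm _ (Fin.le_last m))).antisymm hmJ⟩

theorem sandwiched_ideal_eq (q : ℕ) (I : Fin (q + 1) → Set α)
    (hI : ∀ k, IsPosetIdeal (I k))
    (hchain : ∀ i j, i ≤ j → I i ⊆ I j)
    (hconn : ∀ i j, i < j → ConnectedIn (I j \ I i))
    (J : Set α) (hJ : IsPosetIdeal J) (h0 : I 0 ⊆ J) (hq : J ⊆ I (Fin.last q))
    (hblocks : ∀ k : Fin q, I k.succ \ I k.castSucc ⊆ J ∨ (I k.succ \ I k.castSucc) ∩ J = ∅) :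
    ∃ k, J = I k :=
  sandwiched_ideal_eq_general q I hI hconn J hJ h0 hq hblocks
end
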